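/- Let (X, ‖·‖) be an extended normed linear space with flc topology τ_F, and let B_{X*} = {f ∈ X* : ‖f‖_op ≤ 1} where ‖f‖_op = sup{|f(x)| : ‖x‖ ≤ 1}. Then B_{X*} with the weak* topology is metrizable if and only if (X, τ_F) is separable. -/

import Mathlib

/-!
Members of the dual unit ball `B` are exactly the functionals dominated by `ρ`, every continuous
functional has a nonzero multiple in `B`, and the weak* topology of `B` is that of `ℝ^X`.

If `B` is metrizable, a countable neighbourhood base of `0 ∈ B` involves only countably many
points `D ⊆ X`, so a continuous functional vanishing on `D` vanishes. As `(X, ρ)` and `(X, τ_F)`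
have the same continuous dual, Hahn–Banach in the locally convex space `(X, τ_F)` makes `span D`
dense.

Conversely, if `D` is countable and `τ_F`-dense, then `span D` is `ρ`-dense: otherwise the
`ρ`-distance to `span D`, an extended seminorm, is nonzero somewhere, and Hahn–Banach on its
finiteness subspace gives a functional dominated by it, hence `τ_F`-continuous, vanishing on `D`
but not identically. Evaluation at any point is then a uniform limit on `B` of evaluations at
points of `span D`, so `B` embeds into `ℝ^D`.
-/

open scoped ENNReal Pointwise
open TopologicalSpace

section ElcsDefs

variable {X : Type*} [AddCommGroup X] [Module ℝ X]

/-- An extended seminorm: absolutely homogeneous (with `∞·0 = 0` conventions of `ℝ≥0∞`)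
and subadditive map into `[0,∞]`. -/
def IsExtSeminorm (ρ : X → ℝ≥0∞) : Prop :=
  (∀ (a : ℝ) (x : X), ρ (a • x) = ENNReal.ofReal |a| * ρ x) ∧
  (∀ x y : X, ρ (x + y) ≤ ρ x + ρ y)

/-- An extended norm is a definite extended seminorm. -/
def IsExtNorm (ρ : X → ℝ≥0∞) : Prop :=
  IsExtSeminorm ρ ∧ ∀ x : X, ρ x = 0 → x = 0

/-- The topology induced by a family of extended seminorms: generated by all balls. -/
def elcsTopology (P : Set (X → ℝ≥0∞)) : TopologicalSpace X :=
  TopologicalSpace.generateFrom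
    {s | ∃ ρ ∈ P, ∃ c : X, ∃ ε : ℝ≥0∞, 0 < ε ∧ s = {x | ρ (x - c) < ε}}

/-- `(X, t)` is an extended locally convex space with defining family `P`. -/
def IsELCS (t : TopologicalSpace X) (P : Set (X → ℝ≥0∞)) : Prop :=
  (∀ ρ ∈ P, IsExtSeminorm ρ) ∧ t = elcsTopology P

theorem IsExtSeminorm.map_zero {ρ : X → ℝ≥0∞} (h : IsExtSeminorm ρ) : ρ 0 = 0 := by
  have h0 := h.1 0 0
  simpa using h0

/-- The finiteness subspace `X_fin^ρ = {x : ρ x < ∞}` of an extended seminorm. -/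
def finSubmodule {ρ : X → ℝ≥0∞} (h : IsExtSeminorm ρ) : Submodule ℝ X where
  carrier := {x | ρ x < ⊤}
  add_mem' := fun {x y} hx hy =>
    lt_of_le_of_lt (h.2 x y) (ENNReal.add_lt_top.2 ⟨hx, hy⟩)
  zero_mem' := by simp [Set.mem_setOf_eq, h.map_zero]
  smul_mem' := fun a x hx => by
    simp only [Set.mem_setOf_eq, h.1 a x]
    exact ENNReal.mul_lt_top ENNReal.ofReal_lt_top hx

/-- The finite subspace `X_fin` of an elcs: points where every continuous extended
seminorm is finite. -/
def XfinSubmodule (t : TopologicalSpace X) : Submodule ℝ X where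
  carrier := {x | ∀ ρ : X → ℝ≥0∞, IsExtSeminorm ρ → @Continuous X ℝ≥0∞ t _ ρ → ρ x < ⊤}
  add_mem' := fun {x y} hx hy ρ hρ hc =>
    lt_of_le_of_lt (hρ.2 x y) (ENNReal.add_lt_top.2 ⟨hx ρ hρ hc, hy ρ hρ hc⟩)
  zero_mem' := by
    intro ρ hρ _
    rw [hρ.map_zero]
    exact ENNReal.zero_lt_top
  smul_mem' := fun a x hx ρ hρ hc => by
    have h1 := hρ.1 a x
    rw [h1]
    exact ENNReal.mul_lt_top ENNReal.ofReal_lt_top (hx ρ hρ hc)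

/-- The continuous dual of `(X, t)` as a submodule of the linear dual. -/
noncomputable def dualSubmodule (t : TopologicalSpace X) : Submodule ℝ (X →ₗ[ℝ] ℝ) where
  carrier := {f | @Continuous X ℝ t _ fun x => f x}
  add_mem' := by
    intro f g hf hg
    simp only [Set.mem_setOf_eq, LinearMap.add_apply] at *
    exact hf.add hg
  zero_mem' := by
    simp only [Set.mem_setOf_eq, LinearMap.zero_apply]
    exact @continuous_const X ℝ t _ 0
  smul_mem' := by
    intro c f hf
    simp only [Set.mem_setOf_eq, LinearMap.smul_apply, smul_eq_mul] at *
    exact (@continuous_const X ℝ t _ c).mul hf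

/-- The weak topology of `(X, t)`: the initial topology induced by the continuous dual. -/
def weakTopology (t : TopologicalSpace X) : TopologicalSpace X :=
  ⨅ f : ↥(dualSubmodule t), TopologicalSpace.induced (fun x => f.1 x) inferInstance

/-- The weak* topology on the dual of `(X, t)`: pointwise convergence on `X`. -/
def weakStarTopology (t : TopologicalSpace X) : TopologicalSpace ↥(dualSubmodule t) :=
  ⨅ x : X, TopologicalSpace.induced (fun f : ↥(dualSubmodule t) => f.1 x) inferInstance

/-- `tF` is the finest locally convex (vector) topology on `X` coarser than `t`. -/
def IsFlcTopology (t tF : TopologicalSpace X) : Prop :=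
  t ≤ tF ∧ @IsTopologicalAddGroup X tF _ ∧ @ContinuousSMul ℝ X _ _ tF ∧
    @LocallyConvexSpace ℝ X _ _ _ _ tF ∧
    ∀ t' : TopologicalSpace X, t ≤ t' → @IsTopologicalAddGroup X t' _ →
      @ContinuousSMul ℝ X _ _ t' → @LocallyConvexSpace ℝ X _ _ _ _ t' → tF ≤ t'

/-- A set `A` is bounded in an elcs: for every neighborhood `U` of `0` there are `r > 0`
and a finite `F ⊆ A` with `A ⊆ F + r • U`. -/
def ElcsBounded (t : TopologicalSpace X) (A : Set X) : Prop :=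
  ∀ U ∈ @nhds X t 0, ∃ r : ℝ, 0 < r ∧ ∃ F : Set X, F.Finite ∧ F ⊆ A ∧ A ⊆ F + r • U

/-- `0 ∈ Core U`: `U` absorbs every point of `X`. -/
def ZeroInCore (U : Set X) : Prop :=
  ∀ x : X, ∃ δ : ℝ, 0 < δ ∧ ∀ s : ℝ, 0 ≤ s → s ≤ δ → s • x ∈ U

/-- A family of linear functionals is equicontinuous on `(X, t)` if it is uniformly bounded
by `1` on some neighborhood of `0`. -/
def EquicontSet (t : TopologicalSpace X) (A : Set (X →ₗ[ℝ] ℝ)) : Prop :=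
  ∃ U ∈ @nhds X t 0, ∀ f ∈ A, ∀ x ∈ U, |f x| ≤ 1

/-- The extended-seminorm-valued sup functional `ρ_A(x) = sup_{f ∈ A} |f x|`. -/
noncomputable def dualSupFun (A : Set (X →ₗ[ℝ] ℝ)) : X → ℝ≥0∞ :=
  fun x => ⨆ f ∈ A, ENNReal.ofReal |f x|

/-- The topology on the dual of uniform convergence on members of a family `𝔅` of subsets
of `X`. -/
def ucTopology (t : TopologicalSpace X) (𝔅 : Set (Set X)) :
    TopologicalSpace ↥(dualSubmodule t) :=
  TopologicalSpace.generateFrom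
    {s | ∃ B ∈ 𝔅, ∃ g : ↥(dualSubmodule t), ∃ ε : ℝ≥0∞, 0 < ε ∧
      s = {f | (⨆ x ∈ B, ENNReal.ofReal |f.1 x - g.1 x|) < ε}}

/-- A vector topology is normable if it is induced by a single everywhere-finite
extended norm, i.e. by a norm. -/
def IsNormableTop {Y : Type*} [AddCommGroup Y] [Module ℝ Y] (t : TopologicalSpace Y) : Prop :=
  ∃ ρ : Y → ℝ≥0∞, IsExtNorm ρ ∧ (∀ y, ρ y < ⊤) ∧ t = elcsTopology {ρ}

/-- `Y` has countable (algebraic) dimension over `ℝ`. -/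
def HasCountableDim (Y : Type*) [AddCommGroup Y] [Module ℝ Y] : Prop :=
  ∃ s : Set Y, s.Countable ∧ Submodule.span ℝ s = ⊤

/-- The Minkowski functional of a set, with values in `[0,∞]` (`inf ∅ = ∞`). -/
noncomputable def minkowskiE (U : Set X) : X → ℝ≥0∞ :=
  fun x => sInf (ENNReal.ofReal '' {r : ℝ | 0 < r ∧ x ∈ r • U})

end ElcsDefs

section FunctionSpaces

variable {Y : Type*} [TopologicalSpace Y]

/-- The subspace of continuous functions that are bounded on `B`. -/
def boundedOnSubmodule (B : Set Y) : Submodule ℝ C(Y, ℝ) where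
  carrier := {f | ∃ M : ℝ, ∀ x ∈ B, |f x| ≤ M}
  add_mem' := by
    rintro f g ⟨M, hM⟩ ⟨N, hN⟩
    exact ⟨M + N, fun x hx => (abs_add_le _ _).trans (add_le_add (hM x hx) (hN x hx))⟩
  zero_mem' := ⟨0, by simp⟩
  smul_mem' := by
    rintro c f ⟨M, hM⟩
    refine ⟨|c| * M, fun x hx => ?_⟩
    simp only [ContinuousMap.smul_apply, smul_eq_mul, abs_mul]
    exact mul_le_mul_of_nonneg_left (hM x hx) (abs_nonneg c)

/-- The sup extended seminorm `ρ_B` on `C(Y, ℝ)` associated to `B ⊆ Y`. -/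
noncomputable def supExtSeminorm (B : Set Y) : C(Y, ℝ) → ℝ≥0∞ :=
  fun f => ⨆ x ∈ B, ENNReal.ofReal |f x|

end FunctionSpaces

open Topology

namespace IsExtSeminorm

variable {X : Type*} [AddCommGroup X] [Module ℝ X] {ρ : X → ℝ≥0∞}

lemma map_neg (h : IsExtSeminorm ρ) (x : X) : ρ (-x) = ρ x := by
  simpa using h.1 (-1) x

noncomputable abbrev toPseudoEMetricSpace (h : IsExtSeminorm ρ) : PseudoEMetricSpace X where
  edist x y := ρ (x - y)
  edist_self x := by simp [h.map_zero]
  edist_comm x y := by rw [← h.map_neg, neg_sub]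
  edist_triangle x y z := by simpa using h.2 (x - y) (y - z)

lemma elcsTopology_eq (h : IsExtSeminorm ρ) :
    elcsTopology {ρ} = h.toPseudoEMetricSpace.toUniformSpace.toTopologicalSpace := by
  let _ := h.toPseudoEMetricSpace
  refine le_antisymm (fun s hs => ?_) (le_generateFrom ?_)
  · refine (@isOpen_iff_forall_mem_open X (elcsTopology {ρ}) s).2 fun x hx => ?_
    obtain ⟨ε, hε, hball⟩ := EMetric.isOpen_iff.1 hs x hx
    exact ⟨_, hball, TopologicalSpace.isOpen_generateFrom_of_mem ⟨ρ, rfl, x, ε, hε, rfl⟩,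
      Metric.mem_eball_self hε⟩
  · rintro _ ⟨_, rfl, c, ε, -, rfl⟩
    exact Metric.isOpen_eball (x := c)

lemma mem_nhds_zero_iff (h : IsExtSeminorm ρ) {s : Set X} :
    s ∈ @nhds X (elcsTopology {ρ}) 0 ↔ ∃ ε > 0, {z | ρ z < ε} ⊆ s := by
  let _ := h.toPseudoEMetricSpace
  have hball : ∀ ε, Metric.eball (0 : X) ε = {z | ρ z < ε} := fun ε => by
    ext z; exact iff_of_eq (congrArg (ρ · < ε) (sub_zero z))
  rw [h.elcsTopology_eq, EMetric.mem_nhds_iff]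
  simp only [hball]

lemma continuous_of_abs_le (h : IsExtSeminorm ρ) (f : X →ₗ[ℝ] ℝ)
    (hf : ∀ z, ENNReal.ofReal |f z| ≤ ρ z) : Continuous[elcsTopology {ρ}, _] f := by
  let _ := h.toPseudoEMetricSpace
  rw [h.elcsTopology_eq]
  refine (LipschitzWith.of_edist_le fun x y => ?_).continuous
  rw [edist_dist, Real.dist_eq, ← map_sub]
  exact hf (x - y)

lemma exists_pos_forall_abs_mul_le_one (h : IsExtSeminorm ρ) (f : X →ₗ[ℝ] ℝ)
    (hf : Continuous[elcsTopology {ρ}, _] f) : ∃ r > 0, ∀ x, ρ x ≤ 1 → |r * f x| ≤ 1 := by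
  let _ : TopologicalSpace X := elcsTopology {ρ}
  have hpre : f ⁻¹' Metric.ball (f 0) 1 ∈ 𝓝 0 :=
    hf.continuousAt.preimage_mem_nhds (Metric.ball_mem_nhds _ one_pos)
  obtain ⟨ε, hε, hball⟩ := h.mem_nhds_zero_iff.1 hpre
  obtain ⟨r, -, hr0, hrε⟩ := ENNReal.lt_iff_exists_real_btwn.1 hε
  have hr : 0 < r := ENNReal.ofReal_pos.1 hr0
  refine ⟨r, hr, fun x hx => ?_⟩
  have hrx : ρ (r • x) < ε := by
    rw [h.1, abs_of_pos hr]
    exact lt_of_le_of_lt (mul_le_of_le_one_right' hx) hrε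
  have := hball hrx
  rw [Set.mem_preimage, f.map_zero, mem_ball_zero_iff, Real.norm_eq_abs, map_smul,
    smul_eq_mul] at this
  exact this.le

end IsExtSeminorm

section ExtInfDist

variable {X : Type*} [AddCommGroup X] [Module ℝ X] {ρ : X → ℝ≥0∞}

noncomputable def extInfDist (ρ : X → ℝ≥0∞) (S : Submodule ℝ X) (x : X) : ℝ≥0∞ :=
  ⨅ y : S, ρ (x - y)

lemma extInfDist_le (S : Submodule ℝ X) (x : X) : extInfDist ρ S x ≤ ρ x :=
  (iInf_le _ 0).trans_eq (by simp)

lemma IsExtSeminorm.extInfDist_eq_zero_of_mem (h : IsExtSeminorm ρ) {S : Submodule ℝ X}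
    {x : X} (hx : x ∈ S) : extInfDist ρ S x = 0 :=
  nonpos_iff_eq_zero.1 ((iInf_le _ ⟨x, hx⟩).trans_eq (by simp [h.map_zero]))

lemma IsExtSeminorm.extInfDist_smul_le (h : IsExtSeminorm ρ) (S : Submodule ℝ X) (a : ℝ)
    (x : X) : extInfDist ρ S (a • x) ≤ ENNReal.ofReal |a| * extInfDist ρ S x := by
  unfold extInfDist
  rw [ENNReal.mul_iInf (by simp)]
  exact le_iInf fun y => (iInf_le _ (a • y)).trans_eq (by rw [S.coe_smul, ← smul_sub, h.1])

lemma IsExtSeminorm.isExtSeminorm_extInfDist (h : IsExtSeminorm ρ) (S : Submodule ℝ X) :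
    IsExtSeminorm (extInfDist ρ S) := by
  refine ⟨fun a x => le_antisymm (h.extInfDist_smul_le S a x) ?_, fun x y => ?_⟩
  · rcases eq_or_ne a 0 with rfl | ha
    · simp
    calc ENNReal.ofReal |a| * extInfDist ρ S x
        = ENNReal.ofReal |a| * extInfDist ρ S (a⁻¹ • a • x) := by rw [inv_smul_smul₀ ha]
      _ ≤ ENNReal.ofReal |a| * (ENNReal.ofReal |a⁻¹| * extInfDist ρ S (a • x)) :=
        by gcongr; exact h.extInfDist_smul_le S _ _
      _ = extInfDist ρ S (a • x) := by
        rw [← mul_assoc, ← ENNReal.ofReal_mul (abs_nonneg a), ← abs_mul, mul_inv_cancel₀ ha,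
          abs_one, ENNReal.ofReal_one, one_mul]
  · refine ENNReal.le_iInf_add_iInf fun s s' => (iInf_le _ (s + s')).trans ?_
    rw [S.coe_add, add_sub_add_comm]
    exact h.2 _ _

end ExtInfDist

namespace IsExtSeminorm

variable {X : Type*} [AddCommGroup X] [Module ℝ X] {ρ : X → ℝ≥0∞}

lemma ofReal_abs_le_of_forall_le_one (h : IsExtSeminorm ρ) {f : X →ₗ[ℝ] ℝ}
    (hf : ∀ x, ρ x ≤ 1 → |f x| ≤ 1) (z : X) : ENNReal.ofReal |f z| ≤ ρ z := by
  rcases eq_or_ne (ρ z) ⊤ with hz | hz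
  · simp [hz]
  rw [← ENNReal.ofReal_toReal hz]
  refine ENNReal.ofReal_le_ofReal (le_of_forall_gt_imp_ge_of_dense fun s hs => ?_)
  have hs0 : 0 < s := ENNReal.toReal_nonneg.trans_lt hs
  have hsz : ρ (s⁻¹ • z) ≤ 1 := by
    rw [h.1, abs_of_pos (inv_pos.2 hs0), ← ENNReal.ofReal_toReal hz,
      ← ENNReal.ofReal_mul (inv_nonneg.2 hs0.le), ENNReal.ofReal_le_one, inv_mul_le_one₀ hs0]
    exact hs.le
  have := hf _ hsz
  rwa [map_smul, smul_eq_mul, abs_mul, abs_of_pos (inv_pos.2 hs0), inv_mul_le_one₀ hs0] at this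

noncomputable def finSeminorm (h : IsExtSeminorm ρ) : Seminorm ℝ (finSubmodule h) :=
  Seminorm.of (fun w => (ρ w).toReal)
    (fun v w => ENNReal.toReal_le_add (h.2 v w) v.2.ne w.2.ne)
    (fun a w => by
      rw [Submodule.coe_smul, h.1, ENNReal.toReal_mul, ENNReal.toReal_ofReal (abs_nonneg a),
        Real.norm_eq_abs])

/-- Hahn–Banach on the finiteness subspace `{ρ < ∞}` if `v` lies in it; otherwise any functional
vanishing on that subspace but not at `v`. -/
lemma exists_linearMap_ne_zero_ofReal_abs_le (h : IsExtSeminorm ρ) {v : X} (hv : ρ v ≠ 0) :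
    ∃ f : X →ₗ[ℝ] ℝ, f v ≠ 0 ∧ ∀ z, ENNReal.ofReal |f z| ≤ ρ z := by
  suffices ∃ f : X →ₗ[ℝ] ℝ, f v ≠ 0 ∧ ∀ z, ρ z < ⊤ → |f z| ≤ (ρ z).toReal by
    obtain ⟨f, hfv, hf⟩ := this
    refine ⟨f, hfv, fun z => ?_⟩
    rcases eq_or_ne (ρ z) ⊤ with hz | hz
    · simp [hz]
    · exact (ENNReal.ofReal_le_ofReal (hf z hz.lt_top)).trans_eq (ENNReal.ofReal_toReal hz)
  by_cases hvfin : v ∈ finSubmodule h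
  · set w : finSubmodule h := ⟨v, hvfin⟩
    have hw : w ≠ 0 := fun hw0 => hv (by simpa [w, h.map_zero] using congrArg (ρ ·.1) hw0)
    obtain ⟨g, hg, hgp⟩ := Module.Dual.exists_extension_of_le_seminorm_real _
      (LinearPMap.mkSpanSingleton w (h.finSeminorm w) hw).toFun (p := h.finSeminorm) <| by
        rintro ⟨_, hx⟩
        obtain ⟨c, rfl⟩ := Submodule.mem_span_singleton.1 hx
        rw [LinearPMap.toFun_eq_coe, LinearPMap.mkSpanSingleton'_apply, map_smul_eq_mul,
          smul_eq_mul, Real.norm_eq_abs]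
        exact mul_le_mul_of_nonneg_right (le_abs_self c) (apply_nonneg h.finSeminorm w)
    obtain ⟨f, hf⟩ := LinearMap.exists_extend g
    refine ⟨f, ?_, fun z hz => ?_⟩
    · have hfv : f v = (ρ v).toReal := by
        rw [show f v = g w from congrArg (· w) hf, hg ⟨w, Submodule.mem_span_singleton_self w⟩]
        exact LinearPMap.mkSpanSingleton'_apply_self _ _ _ _
      rw [hfv]
      exact (ENNReal.toReal_pos hv hvfin.ne).ne'
    · rw [show f z = g ⟨z, hz⟩ from congrArg (· ⟨z, hz⟩) hf]
      exact hgp _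
  · obtain ⟨f, hfv, hker⟩ := Submodule.exists_le_ker_of_notMem hvfin
    exact ⟨f, hfv, fun z hz => by simp [LinearMap.mem_ker.1 (hker hz)]⟩

end IsExtSeminorm

lemma IsFlcTopology.continuous_of_continuous {X : Type*} [AddCommGroup X] [Module ℝ X]
    {t tF : TopologicalSpace X} (hF : IsFlcTopology t tF) (f : X →ₗ[ℝ] ℝ)
    (hf : Continuous[t, _] f) : Continuous[tF, _] f := by
  obtain ⟨hle, hg, hsm, hlc, hmax⟩ := hF
  let tf : TopologicalSpace X := TopologicalSpace.induced f inferInstance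
  have htF : tF ≤ tF ⊓ tf :=
    hmax _ (le_inf hle (continuous_iff_le_induced.1 hf))
      (topologicalAddGroup_inf hg (topologicalAddGroup_induced f))
      (@continuousSMul_inf ℝ X _ _ _ _ hsm (continuousSMul_induced f))
      (LocallyConvexSpace.inf hlc (LocallyConvexSpace.induced f))
  exact continuous_le_dom (htF.trans inf_le_right) continuous_induced_dom

lemma IsExtSeminorm.extInfDist_span_eq_zero {X : Type*} [AddCommGroup X] [Module ℝ X]
    {ρ : X → ℝ≥0∞} (h : IsExtSeminorm ρ) {tF : TopologicalSpace X}
    (hF : IsFlcTopology (elcsTopology {ρ}) tF) {D : Set X} (hD : @Dense X tF D) (x : X) :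
    extInfDist ρ (Submodule.span ℝ D) x = 0 := by
  by_contra hx
  obtain ⟨f, hfx, hf⟩ :=
    (h.isExtSeminorm_extInfDist _).exists_linearMap_ne_zero_ofReal_abs_le hx
  have hfF : Continuous[tF, _] f := hF.continuous_of_continuous f <|
    h.continuous_of_abs_le f fun z => (hf z).trans (extInfDist_le _ z)
  have hDker : D ⊆ f ⁻¹' {0} := fun d hd => by
    simpa using (hf d).trans_eq (h.extInfDist_eq_zero_of_mem (Submodule.subset_span hd))
  exact hfx (closure_minimal hDker (isClosed_singleton.preimage hfF) (hD x))

section Evaluations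

variable {X T : Type*} [AddCommGroup X] [Module ℝ X] [TopologicalSpace T] {ρ : X → ℝ≥0∞}

lemma continuous_apply_of_extInfDist_span_eq_zero (L : T → X →ₗ[ℝ] ℝ)
    (hL : ∀ τ z, ENNReal.ofReal |L τ z| ≤ ρ z) {D : Set X}
    (hD : ∀ x, extInfDist ρ (Submodule.span ℝ D) x = 0)
    (hcont : ∀ d ∈ D, Continuous fun τ => L τ d) (x : X) : Continuous fun τ => L τ x := by
  have hspan : ∀ y ∈ Submodule.span ℝ D, Continuous fun τ => L τ y := by
    intro y hy
    induction hy using Submodule.span_induction with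
    | mem y hy => exact hcont y hy
    | zero => simpa using continuous_const
    | add y z _ _ hy hz =>
      simp only [map_add]
      exact hy.add hz
    | smul a y _ hy =>
      simp only [map_smul, smul_eq_mul]
      exact continuous_const.mul hy
  refine continuous_of_uniform_approx_of_continuous fun u hu => ?_
  obtain ⟨ε, hε, hεu⟩ := Metric.mem_uniformity_dist.1 hu
  obtain ⟨y, hy⟩ := iInf_lt_iff.1 ((hD x).trans_lt (ENNReal.ofReal_pos.2 hε))
  refine ⟨fun τ => L τ y, hspan y y.2, fun τ => hεu ?_⟩
  rw [Real.dist_eq, ← map_sub]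
  exact (ENNReal.ofReal_lt_ofReal_iff hε).1 ((hL τ _).trans_lt hy)

lemma metrizableSpace_of_isEmbedding_of_extInfDist_span_eq_zero (L : T → X →ₗ[ℝ] ℝ)
    (hemb : IsEmbedding fun τ x => L τ x) (hL : ∀ τ z, ENNReal.ofReal |L τ z| ≤ ρ z)
    {D : Set X} (hDc : D.Countable) (hD : ∀ x, extInfDist ρ (Submodule.span ℝ D) x = 0) :
    MetrizableSpace T := by
  have := hDc.to_subtype
  have := hemb.t2Space
  let Φ : T → D → ℝ := fun τ d => L τ d
  have hΦ : Continuous Φ := continuous_pi fun d => (continuous_apply d.1).comp hemb.continuous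
  have hcoord : ∀ x, Continuous[TopologicalSpace.induced Φ inferInstance, _] fun τ => L τ x :=
    @continuous_apply_of_extInfDist_span_eq_zero _ _ _ _
      (TopologicalSpace.induced Φ inferInstance) _ L hL D hD fun d hd =>
      @Continuous.comp _ _ _ (TopologicalSpace.induced Φ inferInstance) _ _ _ _
        (continuous_apply (⟨d, hd⟩ : D)) continuous_induced_dom
  have hind : IsInducing Φ := by
    refine ⟨le_antisymm (continuous_iff_le_induced.1 hΦ) ?_⟩
    rw [hemb.eq_induced]
    exact continuous_iff_le_induced.1
      (@continuous_pi _ _ _ (TopologicalSpace.induced Φ inferInstance) _ _ hcoord)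
  exact hind.isEmbedding.metrizableSpace

end Evaluations

lemma exists_countable_forall_eq_of_isInducing {T ι : Type*} {Y : ι → Type*}
    [TopologicalSpace T] [∀ i, TopologicalSpace (Y i)] [FirstCountableTopology T] [T1Space T]
    {g : T → ∀ i, Y i} (hg : IsInducing g) (τ₀ : T) :
    ∃ I : Set ι, I.Countable ∧ ∀ τ, (∀ i ∈ I, g τ i = g τ₀ i) → τ = τ₀ := by
  obtain ⟨U, hU⟩ := (𝓝 τ₀).exists_antitone_basis
  have hfin : ∀ n, ∃ I : Set ι, I.Finite ∧ ∀ τ, (∀ i ∈ I, g τ i = g τ₀ i) → τ ∈ U n := by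
    intro n
    obtain ⟨V, hV, hVU⟩ := Filter.mem_comap.1 (hg.nhds_eq_comap τ₀ ▸ hU.mem n)
    rw [nhds_pi, Filter.mem_pi] at hV
    obtain ⟨I, hI, s, hs, hsV⟩ := hV
    exact ⟨I, hI, fun τ hτ => hVU (hsV fun i hi => (hτ i hi).symm ▸ mem_of_mem_nhds (hs i))⟩
  choose I hIfin hIU using hfin
  refine ⟨⋃ n, I n, Set.countable_iUnion fun n => (hIfin n).countable, fun τ hτ => ?_⟩
  by_contra hne
  obtain ⟨n, -, hn⟩ := hU.toHasBasis.mem_iff.1 (isOpen_compl_singleton.mem_nhds (Ne.symm hne))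
  exact hn (hIU n τ fun i hi => hτ i (Set.mem_iUnion_of_mem n hi)) rfl

lemma dense_span_of_forall_eq_zero {E : Type*} [TopologicalSpace E] [AddCommGroup E]
    [Module ℝ E] [IsTopologicalAddGroup E] [ContinuousSMul ℝ E] [LocallyConvexSpace ℝ E]
    {D : Set E} (h : ∀ f : StrongDual ℝ E, (∀ d ∈ D, f d = 0) → f = 0) :
    Dense (Submodule.span ℝ D : Set E) := by
  refine dense_iff_closure_eq.2 (Set.eq_univ_of_forall fun x => by_contra fun hx => ?_)
  obtain ⟨f, u, hfu, hux⟩ :=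
    geometric_hahn_banach_closed_point (Submodule.convex _).closure isClosed_closure hx
  have hu : 0 < u := by simpa using hfu 0 (subset_closure (Submodule.zero_mem _))
  -- `f` is bounded above on a subspace, so it vanishes there
  have hfD : ∀ d ∈ D, f d = 0 := fun d hd => by_contra fun hfd => by
    have := hfu ((u / f d) • d)
      (subset_closure (Submodule.smul_mem _ _ (Submodule.subset_span hd)))
    rw [map_smul, smul_eq_mul, div_mul_cancel₀ _ hfd] at this
    exact lt_irrefl u this
  rw [h f hfD, zero_apply] at hux
  linarith

section WeakStar

variable {X : Type*} [AddCommGroup X] [Module ℝ X]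

lemma isEmbedding_weakStarTopology (t : TopologicalSpace X) :
    @IsEmbedding _ (X → ℝ) (weakStarTopology t) _ fun f x => f.1 x := by
  let _ := weakStarTopology t
  refine ⟨⟨?_⟩, fun f g hfg => Subtype.ext (LinearMap.ext (congrFun hfg))⟩
  simp only [Pi.topologicalSpace, induced_iInf, induced_compose]
  rfl

abbrev DualUnitBall (ρ : X → ℝ≥0∞) (t : TopologicalSpace X) : Type _ :=
  {f : ↥(dualSubmodule t) // ∀ x : X, ρ x ≤ 1 → |f.1 x| ≤ 1}

lemma isEmbedding_dualUnitBall (ρ : X → ℝ≥0∞) (t : TopologicalSpace X) :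
    @IsEmbedding (DualUnitBall ρ t) (X → ℝ)
      (TopologicalSpace.induced Subtype.val (weakStarTopology t)) _ fun f x => f.1.1 x := by
  let _ := weakStarTopology t
  exact (isEmbedding_weakStarTopology t).comp IsEmbedding.subtypeVal

end WeakStar

section UnitBall

variable {X : Type*} [AddCommGroup X] [Module ℝ X] {ρ : X → ℝ≥0∞}

lemma separableSpace_of_metrizableSpace_dualUnitBall (h : IsExtSeminorm ρ)
    {tF : TopologicalSpace X} (hF : IsFlcTopology (elcsTopology {ρ}) tF)
    (hm : @MetrizableSpace (DualUnitBall ρ (elcsTopology {ρ}))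
      (TopologicalSpace.induced Subtype.val (weakStarTopology _))) :
    @SeparableSpace X tF := by
  let _ := weakStarTopology (elcsTopology {ρ})
  have := hm
  let zero : DualUnitBall ρ (elcsTopology {ρ}) := ⟨0, fun x _ => by simp⟩
  obtain ⟨D, hDc, hD⟩ :=
    exists_countable_forall_eq_of_isInducing (isEmbedding_dualUnitBall ρ _).isInducing zero
  have hvan : ∀ f : X →ₗ[ℝ] ℝ, Continuous[elcsTopology {ρ}, _] f → (∀ d ∈ D, f d = 0) →
      f = 0 := by
    intro f hf hfD
    obtain ⟨r, hr, hrf⟩ := h.exists_pos_forall_abs_mul_le_one f hf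
    let fB : DualUnitBall ρ (elcsTopology {ρ}) :=
      ⟨⟨r • f, Submodule.smul_mem _ r hf⟩, fun x hx => by simpa using hrf x hx⟩
    have hfB : r • f = 0 := congrArg (·.1.1) (hD fB fun d hd => by simp [fB, hfD d hd, zero])
    exact (smul_eq_zero.1 hfB).resolve_left hr.ne'
  let _ := tF
  have := hF.2.1
  have := hF.2.2.1
  have := hF.2.2.2.1
  have hdense : Dense (Submodule.span ℝ D : Set X) := dense_span_of_forall_eq_zero fun f hfD =>
    ContinuousLinearMap.coe_injective (hvan f (continuous_le_dom hF.1 f.continuous) hfD)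
  exact isSeparable_univ_iff.1 (hdense.closure_eq ▸ hDc.isSeparable.span.closure)

lemma metrizableSpace_dualUnitBall_of_separableSpace (h : IsExtSeminorm ρ)
    {tF : TopologicalSpace X} (hF : IsFlcTopology (elcsTopology {ρ}) tF)
    (hsep : @SeparableSpace X tF) :
    @MetrizableSpace (DualUnitBall ρ (elcsTopology {ρ}))
      (TopologicalSpace.induced Subtype.val (weakStarTopology _)) := by
  let _ := weakStarTopology (elcsTopology {ρ})
  obtain ⟨D, hDc, hD⟩ := @exists_countable_dense X tF hsep
  exact metrizableSpace_of_isEmbedding_of_extInfDist_span_eq_zero (fun f => f.1.1)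
    (isEmbedding_dualUnitBall ρ _) (fun f => h.ofReal_abs_le_of_forall_le_one f.2) hDc
    (h.extInfDist_span_eq_zero hF hD)

end UnitBall

/-- the closed unit ball of the dual of an enls is weak* metrizable iff
`(X, τ_F)` is separable. -/
theorem stmt11 {X : Type*} [AddCommGroup X] [Module ℝ X]
    (ρ : X → ℝ≥0∞) (hρ : IsExtNorm ρ)
    (t tF : TopologicalSpace X) (ht : t = elcsTopology {ρ})
    (hF : IsFlcTopology t tF) :
    @TopologicalSpace.MetrizableSpace
        {f : ↥(dualSubmodule t) // ∀ x : X, ρ x ≤ 1 → |f.1 x| ≤ 1}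
        (TopologicalSpace.induced Subtype.val (weakStarTopology t)) ↔
      @TopologicalSpace.SeparableSpace X tF := by
  subst ht
  exact ⟨separableSpace_of_metrizableSpace_dualUnitBall hρ.1 hF,
    metrizableSpace_dualUnitBall_of_separableSpace hρ.1 hF⟩
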